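/- Let Σ be a finite alphabet, n : Σ → ℕ a frame defined on all of Σ, and p ∈ PBA_n. Then there exists an (n,p)-uniform string s : {1,…,2^{M_n}} → Σ. -/

import Mathlib

open scoped Classical

/-- A frame on the alphabet `A`: a positive integer value for each character of a nonempty
subset `supp` of `A`. -/
structure Frame (A : Type*) where
  supp : Finset A
  supp_nonempty : supp.Nonempty
  val : A → ℕ
  val_pos : ∀ a ∈ supp, 1 ≤ val a

/-- `M_n = max_{σ ∈ Σ_n} (n σ + 5)`. -/
def Frame.M {A : Type*} (F : Frame A) : ℕ := F.supp.sup fun a => F.val a + 5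

/-- A (partial) string with characters from `A`: a partial function `ℕ → A`, `none` meaning
"not in the domain". -/
def PStr (A : Type*) := ℕ → Option A

/-- The domain of a string. -/
def PStr.dom {A : Type*} (s : PStr A) : Set ℕ := {i | (s i).isSome}

/-- The set of characters appearing in a string. -/
def PStr.chars {A : Type*} (s : PStr A) : Set A := {σ | ∃ i, s i = some σ}

/-- `max_n I = ⌈(max I) / 2^{M_n}⌉` for the domain `I` of the string `s`. -/
noncomputable def PStr.maxn {A : Type*} (F : Frame A) (s : PStr A) : ℕ :=
  (sSup s.dom + 2 ^ F.M - 1) / 2 ^ F.M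

/-- `s[n,k]`: the restriction of the translate of `s` by `−(k−1)·2^{M_n}` to `{1,…,2^{M_n}}`. -/
def PStr.shift {A : Type*} (F : Frame A) (k : ℕ) (s : PStr A) : PStr A :=
  fun i => if 1 ≤ i ∧ i ≤ 2 ^ F.M then s (i + (k - 1) * 2 ^ F.M) else none

/-- `MaxGap(s,σ)` (in `ℕ∞`): the sup of all `m ≥ 1` such that for some `k` with
`k, k+m` in the domain, `σ` does not occur strictly between `k` and `k+m`. -/
noncomputable def PStr.maxGap {A : Type*} (s : PStr A) (σ : A) : ℕ∞ :=
  sSup ((fun m : ℕ => (m : ℕ∞)) ''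
    {m | 1 ≤ m ∧ ∃ k : ℕ, k ∈ s.dom ∧ k + m ∈ s.dom ∧
      ∀ i ∈ s.dom, k < i → i < k + m → s i ≠ some σ})

/-- `MinGap(s,σ)` (in `ℕ∞`): the inf of all `m ≥ 1` with `s k = s (k+m) = σ` for some `k`. -/
noncomputable def PStr.minGap {A : Type*} (s : PStr A) (σ : A) : ℕ∞ :=
  sInf ((fun m : ℕ => (m : ℕ∞)) ''
    {m | 1 ≤ m ∧ ∃ k : ℕ, s k = some σ ∧ s (k + m) = some σ})

/-- `s` is locally `n`-compatible: for every `σ ∈ Σ_n` appearing in `s`,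
`2^{n σ − 1} ≤ MinGap(s,σ) ≤ MaxGap(s,σ) ≤ 2^{n σ}`. -/
def PStr.LocallyCompatible {A : Type*} (F : Frame A) (s : PStr A) : Prop :=
  ∀ σ ∈ F.supp, σ ∈ s.chars →
    (2 ^ (F.val σ - 1) : ℕ∞) ≤ s.minGap σ ∧ s.minGap σ ≤ s.maxGap σ ∧
      s.maxGap σ ≤ (2 ^ F.val σ : ℕ∞)

/-- `s` is `n`-compatible: for every `σ ∈ Σ_n`,
`2^{n σ − 1} ≤ MinGap(s,σ) ≤ MaxGap(s,σ) ≤ 2^{n σ}`. -/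
def PStr.Compatible {A : Type*} (F : Frame A) (s : PStr A) : Prop :=
  ∀ σ ∈ F.supp,
    (2 ^ (F.val σ - 1) : ℕ∞) ≤ s.minGap σ ∧ s.minGap σ ≤ s.maxGap σ ∧
      s.maxGap σ ≤ (2 ^ F.val σ : ℕ∞)

/-- `s ∨ t`: the common extension of strings with disjoint domains. -/
def PStr.join {A : Type*} (s t : PStr A) : PStr A :=
  fun i => (s i).orElse fun _ => t i

/-- The translate `arr s m` of `s` by `m ≥ 0`. -/
def PStr.translate {A : Type*} (m : ℕ) (s : PStr A) : PStr A :=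
  fun i => if m ≤ i then s (i - m) else none

/-- The restriction of `s` to a set of positions. -/
noncomputable def PStr.restrict {A : Type*} (s : PStr A) (I : Set ℕ) : PStr A :=
  fun i => if i ∈ I then s i else none

/-- The `n`-concatenation `s ∧_n t`. -/
noncomputable def PStr.concatN {A : Type*} (F : Frame A) (s t : PStr A) : PStr A :=
  s.join (PStr.translate (s.maxn F * 2 ^ F.M) t)

/-- `s ⋄_n t`: glueing overlapping strings (assuming `s[n,−1] = t[n,+1]`). -/
noncomputable def PStr.diamondN {A : Type*} (F : Frame A) (s t : PStr A) : PStr A :=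
  PStr.concatN F (s.restrict (Set.Icc 1 ((s.maxn F - 1) * 2 ^ F.M))) t

/-- `s →_{n,t} s'`: `t` is a locally `n`-compatible connecting string from `s` to `s'`,
i.e. `Σ_t = Σ_s = Σ_{s'}`, `t[n,+1] = s` and `t[n,−1] = s'`. -/
def PStr.StrArrow {A : Type*} (F : Frame A) (s s' t : PStr A) : Prop :=
  t.chars = s.chars ∧ s.chars = s'.chars ∧ t.LocallyCompatible F ∧
    t.shift F 1 = s ∧ t.shift F (t.maxn F) = s'

/-- `p` is a probability distribution on the finite alphabet `A`. -/
def IsProbDist {A : Type*} [Fintype A] (p : A → ℝ) : Prop :=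
  (∀ σ, 0 ≤ p σ) ∧ ∑ σ, p σ = 1

/-- `x` is one of the two binary values `2 ^ (−n σ)`, `2 ^ (−(n σ − 1))` allowed at `σ`. -/
def BinaryVal {A : Type*} (n : A → ℕ) (σ : A) (x : ℝ) : Prop :=
  x = (2 : ℝ) ^ (-(n σ : ℤ)) ∨ x = (2 : ℝ) ^ (-((n σ : ℤ) - 1))

/-- `Π_n`: probability distributions `p` with `2^(−n σ) ≤ p σ ≤ 2^(−(n σ −1))` for all `σ`. -/
def PiN {A : Type*} [Fintype A] (n : A → ℕ) : Set (A → ℝ) :=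
  {p | IsProbDist p ∧
    ∀ σ, (2 : ℝ) ^ (-(n σ : ℤ)) ≤ p σ ∧ p σ ≤ (2 : ℝ) ^ (-((n σ : ℤ) - 1))}

/-- `PBA_n`: pseudo-binary approximations for the frame `n`. -/
def PBA {A : Type*} [Fintype A] (n : A → ℕ) : Set (A → ℝ) :=
  {p | p ∈ PiN n ∧
    ∀ σ τ : A, ¬ BinaryVal n σ (p σ) → ¬ BinaryVal n τ (p τ) → σ = τ}

/-- `J` is an `N`-saturated arithmetic progression in `{1,…,2^N}` with common difference `D`:
`D = 2^j` for some `j ≤ N`, and `J` consists of all elements of `{1,…,2^N}` congruent to its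
first element `r ∈ {1,…,D}` modulo `D`. -/
def IsSatAP (N : ℕ) (J : Set ℕ) (D : ℕ) : Prop :=
  (∃ j : ℕ, j ≤ N ∧ D = 2 ^ j) ∧
  ∃ r : ℕ, 1 ≤ r ∧ r ≤ D ∧ J = {x | ∃ m : ℕ, m < 2 ^ N / D ∧ x = r + m * D}

/-- `s` is an `(n,p)`-uniform string on `{1,…,2^{M_n}}`: its density function is `p`, and for
every `σ ∈ Σ_n` the occurrence set of `σ` is sandwiched between saturated arithmetic progressions
with common differences `2^{n σ}` and `2^{n σ − 1}`. -/
def PStr.Uniform {A : Type*} [Fintype A] (F : Frame A) (p : A → ℝ) (s : PStr A) : Prop :=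
  s.dom = Set.Icc 1 (2 ^ F.M) ∧
  (∀ σ : A, ({i : ℕ | s i = some σ}.ncard : ℝ) = p σ * 2 ^ F.M) ∧
  ∀ σ ∈ F.supp, ∃ J₁ J₂ : Set ℕ,
    IsSatAP F.M J₁ (2 ^ F.val σ) ∧ IsSatAP F.M J₂ (2 ^ (F.val σ - 1)) ∧
    J₁ ⊆ {i : ℕ | s i = some σ} ∧ {i : ℕ | s i = some σ} ⊆ J₂

/-!
Scaling `p` by `2 ^ M` gives natural counts `c σ` with `2 ^ (M - n σ) ≤ c σ ≤ 2 ^ (M - n σ + 1)`,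
all but at most one of them powers of two. Lay the characters out as consecutive blocks of
`[0, 2 ^ M)`: the powers of two in decreasing order, the exceptional character last. Then every
power-of-two block is aligned to its own length and the exceptional block ends at `2 ^ M`, so each
block contains a dyadic interval of length `2 ^ (M - n σ)` and lies inside one of twice that length.

The string reads this layout through the bit-reversal permutation of `[0, 2 ^ M)`, which maps a
dyadic interval of length `2 ^ K` onto a residue class modulo `2 ^ (M - K)`, that is, onto a
saturated arithmetic progression. This gives the two progressions around each occurrence set.
-/

namespace Nat

def bitRev : ℕ → ℕ → ℕ
  | 0, _ => 0
  | M + 1, y => bit (y.testBit M) (bitRev M y)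

theorem testBit_bitRev (M y i : ℕ) :
    (bitRev M y).testBit i = (decide (i < M) && y.testBit (M - 1 - i)) := by
  induction M generalizing i with
  | zero => simp [bitRev]
  | succ M ih =>
    cases i with
    | zero => simp [bitRev]
    | succ i =>
      rw [bitRev, testBit_bit_succ, ih]
      congr 1
      · simp
      · congr 1; omega

theorem bitRev_lt (M y : ℕ) : bitRev M y < 2 ^ M :=
  lt_pow_two_of_testBit _ fun i hi => by simp [testBit_bitRev, not_lt.2 hi]

theorem bitRev_bitRev {M y : ℕ} (hy : y < 2 ^ M) : bitRev M (bitRev M y) = y := by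
  refine eq_of_testBit_eq fun i => ?_
  rw [testBit_bitRev, testBit_bitRev]
  by_cases hi : i < M
  · simp [hi, show M - 1 - (M - 1 - i) = i by omega, show M - 1 - i < M by omega]
  · have hyi : y < 2 ^ i := hy.trans_le (pow_le_pow_right₀ one_le_two (not_lt.1 hi))
    simp [hi, testBit_eq_false_of_lt hyi]

theorem bitRev_div_two_pow {M j : ℕ} (hj : j ≤ M) (y : ℕ) :
    bitRev M y / 2 ^ (M - j) = bitRev j (y % 2 ^ j) := by
  refine eq_of_testBit_eq fun i => ?_
  rw [testBit_div_two_pow, testBit_bitRev, testBit_bitRev, testBit_mod_two_pow]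
  by_cases hi : i < j
  · simp [hi, show i + (M - j) < M by omega, show M - 1 - (i + (M - j)) = j - 1 - i by omega,
      show j - 1 - i < j by omega]
  · simp [hi, show ¬ i + (M - j) < M by omega]

end Nat

theorem isSatAP_setOf_sub_one_mod {N j r : ℕ} (hj : j ≤ N) (hr : r < 2 ^ j) :
    IsSatAP N {x | x ∈ Set.Icc 1 (2 ^ N) ∧ (x - 1) % 2 ^ j = r} (2 ^ j) := by
  have hN : 2 ^ N = 2 ^ (N - j) * 2 ^ j := by rw [← pow_add, Nat.sub_add_cancel hj]
  have hpos : 0 < 2 ^ j := by positivity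
  refine ⟨⟨j, hj, rfl⟩, r + 1, by omega, hr, ?_⟩
  ext x
  simp only [Set.mem_ofPred_eq, Set.mem_Icc, hN, Nat.mul_div_cancel _ hpos]
  constructor
  · rintro ⟨⟨hx1, hxN⟩, hxr⟩
    refine ⟨(x - 1) / 2 ^ j, ?_, ?_⟩
    · exact Nat.div_lt_of_lt_mul (by rw [mul_comm]; omega)
    · have := Nat.div_add_mod (x - 1) (2 ^ j)
      rw [mul_comm] at this
      omega
  · rintro ⟨m, hm, rfl⟩
    have hmj : (m + 1) * 2 ^ j ≤ 2 ^ (N - j) * 2 ^ j := Nat.mul_le_mul_right _ hm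
    refine ⟨⟨by omega, by rw [add_mul] at hmj; omega⟩, ?_⟩
    rw [show r + 1 + m * 2 ^ j - 1 = r + m * 2 ^ j by omega, Nat.add_mul_mod_self_right,
      Nat.mod_eq_of_lt hr]

def dyadicBlock (K t : ℕ) : Set ℕ := Set.Ico (t * 2 ^ K) ((t + 1) * 2 ^ K)

theorem mem_dyadicBlock_iff {K t y : ℕ} : y ∈ dyadicBlock K t ↔ y / 2 ^ K = t := by
  have : 0 < 2 ^ K := by positivity
  rw [Nat.div_eq_iff this, dyadicBlock, Set.mem_Ico, add_mul, one_mul]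
  omega

theorem dyadicBlock_div_two_pow {K b : ℕ} (hb : 2 ^ K ∣ b) :
    dyadicBlock K (b / 2 ^ K) = Set.Ico b (b + 2 ^ K) := by
  rw [dyadicBlock, add_mul, one_mul, Nat.div_mul_cancel hb]

theorem dyadicBlock_subset_succ {K t : ℕ} : dyadicBlock K t ⊆ dyadicBlock (K + 1) (t / 2) := by
  intro y hy
  rw [mem_dyadicBlock_iff] at hy ⊢
  rw [← hy, Nat.div_div_eq_div_mul, pow_succ]

theorem lt_two_pow_of_mem_dyadicBlock {K M t y : ℕ} (hK : K ≤ M) (hy : y ∈ dyadicBlock K t)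
    (hyM : y < 2 ^ M) : t < 2 ^ (M - K) := by
  rw [← mem_dyadicBlock_iff.1 hy]
  exact Nat.div_lt_of_lt_mul (by rwa [← pow_add, Nat.add_sub_cancel' hK])

def bitRevPreimage (M : ℕ) (I : Set ℕ) : Set ℕ :=
  {x | x ∈ Set.Icc 1 (2 ^ M) ∧ Nat.bitRev M (x - 1) ∈ I}

theorem bitRevPreimage_mono {M : ℕ} {I I' : Set ℕ} (h : I ⊆ I') :
    bitRevPreimage M I ⊆ bitRevPreimage M I' :=
  fun _ hx => ⟨hx.1, h hx.2⟩

theorem bitRevPreimage_eq_image {M : ℕ} {I : Set ℕ} (hI : I ⊆ Set.Iio (2 ^ M)) :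
    bitRevPreimage M I = (fun y => Nat.bitRev M y + 1) '' I := by
  ext x
  constructor
  · rintro ⟨⟨hx1, hxM⟩, hxI⟩
    exact ⟨_, hxI, by dsimp only; rw [Nat.bitRev_bitRev (by omega)]; omega⟩
  · rintro ⟨y, hy, rfl⟩
    dsimp only
    have := Nat.bitRev_lt M y
    refine ⟨⟨by omega, by omega⟩, ?_⟩
    rwa [Nat.add_sub_cancel, Nat.bitRev_bitRev (hI hy)]

theorem ncard_bitRevPreimage {M : ℕ} {I : Set ℕ} (hI : I ⊆ Set.Iio (2 ^ M)) :
    (bitRevPreimage M I).ncard = I.ncard := by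
  rw [bitRevPreimage_eq_image hI]
  refine Set.InjOn.ncard_image fun y hy y' hy' h => ?_
  rw [← Nat.bitRev_bitRev (hI hy), ← Nat.bitRev_bitRev (hI hy'), Nat.add_right_cancel h]

theorem bitRevPreimage_dyadicBlock {K M t : ℕ} (hK : K ≤ M) (ht : t < 2 ^ (M - K)) :
    bitRevPreimage M (dyadicBlock K t) =
      {x | x ∈ Set.Icc 1 (2 ^ M) ∧ (x - 1) % 2 ^ (M - K) = Nat.bitRev (M - K) t} := by
  ext x
  simp only [bitRevPreimage, Set.mem_ofPred_eq, mem_dyadicBlock_iff, and_congr_right_iff]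
  intro _
  have hdiv := Nat.bitRev_div_two_pow (Nat.sub_le M K) (x - 1)
  rw [Nat.sub_sub_self hK] at hdiv
  rw [hdiv]
  constructor
  · rintro rfl
    rw [Nat.bitRev_bitRev (Nat.mod_lt _ (by positivity))]
  · intro h
    rw [h, Nat.bitRev_bitRev ht]

theorem isSatAP_bitRevPreimage_dyadicBlock {K M t : ℕ} (hK : K ≤ M) (ht : t < 2 ^ (M - K)) :
    IsSatAP M (bitRevPreimage M (dyadicBlock K t)) (2 ^ (M - K)) := by
  rw [bitRevPreimage_dyadicBlock hK ht]
  exact isSatAP_setOf_sub_one_mod (Nat.sub_le M K) (Nat.bitRev_lt _ _)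

def SandwichedByDyadicBlocks (K : ℕ) (I : Set ℕ) : Prop :=
  (∃ t, dyadicBlock K t ⊆ I) ∧ ∃ t, I ⊆ dyadicBlock (K + 1) t

theorem sandwichedByDyadicBlocks_of_dvd {K a c : ℕ} (hc : c.isPowerOfTwo) (hlo : 2 ^ K ≤ c)
    (hhi : c ≤ 2 ^ (K + 1)) (hdvd : c ∣ a) : SandwichedByDyadicBlocks K (Set.Ico a (a + c)) := by
  obtain ⟨e, rfl⟩ := hc
  have hblock : Set.Ico a (a + 2 ^ e) = dyadicBlock e (a / 2 ^ e) :=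
    (dyadicBlock_div_two_pow hdvd).symm
  rw [Nat.pow_le_pow_iff_right one_lt_two] at hlo hhi
  obtain rfl | rfl : e = K ∨ e = K + 1 := by omega
  · exact ⟨⟨_, hblock.symm.subset⟩, ⟨_, hblock ▸ dyadicBlock_subset_succ⟩⟩
  · refine ⟨⟨a / 2 ^ K, ?_⟩, ⟨_, hblock.subset⟩⟩
    rw [dyadicBlock_div_two_pow ((pow_dvd_pow 2 K.le_succ).trans hdvd)]
    exact Set.Ico_subset_Ico le_rfl (Nat.add_le_add_left (Nat.pow_le_pow_right two_pos K.le_succ) a)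

theorem sandwichedByDyadicBlocks_of_add_eq {K M a c : ℕ} (hK : K < M) (hlo : 2 ^ K ≤ c)
    (hhi : c ≤ 2 ^ (K + 1)) (hend : a + c = 2 ^ M) :
    SandwichedByDyadicBlocks K (Set.Ico a (a + c)) := by
  have hKM : 2 ^ (K + 1) ≤ 2 ^ M := pow_le_pow_right₀ one_le_two hK
  have hK1 : 2 ^ K ≤ 2 ^ (K + 1) := pow_le_pow_right₀ one_le_two K.le_succ
  have hdvd : ∀ {k}, k ≤ M → 2 ^ k ∣ 2 ^ M - 2 ^ k := fun hk =>
    Nat.dvd_sub (pow_dvd_pow 2 hk) dvd_rfl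
  refine ⟨⟨(2 ^ M - 2 ^ K) / 2 ^ K, ?_⟩, ⟨(2 ^ M - 2 ^ (K + 1)) / 2 ^ (K + 1), ?_⟩⟩
  · rw [dyadicBlock_div_two_pow (hdvd hK.le)]
    exact Set.Ico_subset_Ico (by omega) (by omega)
  · rw [dyadicBlock_div_two_pow (hdvd hK)]
    exact Set.Ico_subset_Ico (by omega) (by omega)

theorem exists_isSatAP_sandwich {K M : ℕ} {I : Set ℕ} (hK : K < M) (hI : I ⊆ Set.Iio (2 ^ M))
    (hsand : SandwichedByDyadicBlocks K I) :
    ∃ J₁ J₂, IsSatAP M J₁ (2 ^ (M - K)) ∧ IsSatAP M J₂ (2 ^ (M - (K + 1))) ∧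
      J₁ ⊆ bitRevPreimage M I ∧ bitRevPreimage M I ⊆ J₂ := by
  obtain ⟨⟨t₁, h₁⟩, ⟨t₂, h₂⟩⟩ := hsand
  have hmem : t₁ * 2 ^ K ∈ dyadicBlock K t₁ := by
    rw [mem_dyadicBlock_iff, Nat.mul_div_cancel _ (by positivity)]
  have ht₁ := lt_two_pow_of_mem_dyadicBlock hK.le hmem (hI (h₁ hmem))
  have ht₂ := lt_two_pow_of_mem_dyadicBlock hK (h₂ (h₁ hmem)) (hI (h₁ hmem))
  exact ⟨_, _, isSatAP_bitRevPreimage_dyadicBlock hK.le ht₁,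
    isSatAP_bitRevPreimage_dyadicBlock hK ht₂, bitRevPreimage_mono h₁, bitRevPreimage_mono h₂⟩

section BlockAllocation

variable {A : Type*} [Fintype A] (c key : A → ℕ)

def blockStart (σ : A) : ℕ :=
  ∑ τ ∈ Finset.univ.filter (fun τ => key τ < key σ), c τ

def allocBlock (σ : A) : Set ℕ :=
  Set.Ico (blockStart c key σ) (blockStart c key σ + c σ)

variable {c key}

theorem blockStart_add_le_of_lt {σ τ : A} (h : key τ < key σ) :
    blockStart c key τ + c τ ≤ blockStart c key σ := by
  rw [blockStart, add_comm, ← Finset.sum_insert (by simp)]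
  refine Finset.sum_le_sum_of_subset fun υ hυ => ?_
  simp only [Finset.mem_insert, Finset.mem_filter, Finset.mem_univ, true_and] at hυ ⊢
  rcases hυ with rfl | hυ
  exacts [h, hυ.trans h]

variable (c key) in
theorem blockStart_add_le_sum (σ : A) : blockStart c key σ + c σ ≤ ∑ τ, c τ := by
  rw [blockStart, add_comm, ← Finset.sum_insert (by simp)]
  exact Finset.sum_le_sum_of_subset (Finset.subset_univ _)

theorem blockStart_add_eq_sum {σ : A} (h : ∀ τ ≠ σ, key τ < key σ) :
    blockStart c key σ + c σ = ∑ τ, c τ := by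
  have hfilter : Finset.univ.filter (fun τ => key τ < key σ) = Finset.univ.erase σ := by
    ext τ
    simp only [Finset.mem_filter, Finset.mem_univ, true_and, Finset.mem_erase, and_true]
    exact ⟨by rintro hlt rfl; exact lt_irrefl _ hlt, h τ⟩
  rw [blockStart, hfilter, Finset.sum_erase_add _ _ (Finset.mem_univ σ)]

theorem dvd_blockStart {σ : A} (h : ∀ τ, key τ < key σ → c σ ∣ c τ) :
    c σ ∣ blockStart c key σ :=
  Finset.dvd_sum fun τ hτ => h τ (Finset.mem_filter.1 hτ).2

variable (c key) in
theorem allocBlock_subset_Iio (σ : A) : allocBlock c key σ ⊆ Set.Iio (∑ τ, c τ) :=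
  fun _ hy => lt_of_lt_of_le hy.2 (blockStart_add_le_sum c key σ)

theorem eq_of_mem_allocBlock (hkey : Function.Injective key) {y : ℕ} {σ τ : A}
    (hσ : y ∈ allocBlock c key σ) (hτ : y ∈ allocBlock c key τ) : σ = τ := by
  obtain h | h | h := lt_trichotomy (key σ) (key τ)
  · have := blockStart_add_le_of_lt (c := c) h
    exact absurd (lt_of_lt_of_le hσ.2 this) (not_lt.2 hτ.1)
  · exact hkey h
  · have := blockStart_add_le_of_lt (c := c) h
    exact absurd (lt_of_lt_of_le hτ.2 this) (not_lt.2 hσ.1)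

theorem exists_mem_allocBlock (hkey : Function.Injective key) {y : ℕ} (hy : y < ∑ τ, c τ) :
    ∃ σ, y ∈ allocBlock c key σ := by
  -- The disjoint blocks have total length `∑ τ, c τ`, so they fill `[0, ∑ τ, c τ)`.
  set U := Finset.univ.biUnion fun σ => Finset.Ico (blockStart c key σ) (blockStart c key σ + c σ)
  have hdisj : (↑(Finset.univ : Finset A) : Set A).PairwiseDisjoint
      fun σ => Finset.Ico (blockStart c key σ) (blockStart c key σ + c σ) :=
    fun σ _ τ _ hne => Finset.disjoint_left.2 fun z hzσ hzτ =>
      hne (eq_of_mem_allocBlock hkey (by simpa [allocBlock] using hzσ)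
        (by simpa [allocBlock] using hzτ))
  have hU : U = Finset.range (∑ τ, c τ) := by
    refine Finset.eq_of_subset_of_card_le (fun z hz => ?_) ?_
    · obtain ⟨σ, -, hzσ⟩ := Finset.mem_biUnion.1 hz
      exact Finset.mem_range.2 (allocBlock_subset_Iio c key σ (by simpa [allocBlock] using hzσ))
    · simp [U, Finset.card_biUnion hdisj]
  obtain ⟨σ, -, hyσ⟩ := Finset.mem_biUnion.1 (hU ▸ Finset.mem_range.2 hy)
  exact ⟨σ, by simpa [allocBlock] using hyσ⟩

variable (c key) in
noncomputable def blockAt (y : ℕ) : Option A :=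
  if h : ∃ σ, y ∈ allocBlock c key σ then some h.choose else none

theorem blockAt_eq_some_iff (hkey : Function.Injective key) {y : ℕ} {σ : A} :
    blockAt c key y = some σ ↔ y ∈ allocBlock c key σ := by
  by_cases h : ∃ σ, y ∈ allocBlock c key σ
  · rw [blockAt, dif_pos h, Option.some_inj]
    exact ⟨fun hσ => hσ ▸ h.choose_spec, fun hσ => eq_of_mem_allocBlock hkey h.choose_spec hσ⟩
  · rw [blockAt, dif_neg h]
    exact ⟨nofun, fun hσ => absurd ⟨σ, hσ⟩ h⟩

theorem blockAt_isSome_iff (hkey : Function.Injective key) {y : ℕ} :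
    (blockAt c key y).isSome ↔ y < ∑ τ, c τ := by
  rw [Option.isSome_iff_exists]
  simp only [blockAt_eq_some_iff hkey]
  exact ⟨fun ⟨σ, hσ⟩ => allocBlock_subset_Iio c key σ hσ, exists_mem_allocBlock hkey⟩

end BlockAllocation

section Alignment

variable {A : Type*} [Fintype A]

theorem exists_injective_key_of_lt (w : A → ℕ) :
    ∃ key : A → ℕ, Function.Injective key ∧ ∀ σ τ, w τ < w σ → key τ < key σ := by
  set n := Fintype.card A
  have hidx (σ : A) : (Fintype.equivFin A σ : ℕ) < n := (Fintype.equivFin A σ).isLt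
  refine ⟨fun σ => w σ * n + Fintype.equivFin A σ, fun σ τ h => ?_, fun σ τ h => ?_⟩
  · have hmod := congrArg (· % n) h
    simp only [Nat.mul_add_mod', Nat.mod_eq_of_lt (hidx _)] at hmod
    exact (Fintype.equivFin A).injective (Fin.ext hmod)
  · have := hidx τ
    nlinarith

theorem exists_key_aligned {c : A → ℕ}
    (hexc : ∀ σ τ, ¬ (c σ).isPowerOfTwo → ¬ (c τ).isPowerOfTwo → σ = τ) :
    ∃ key : A → ℕ, Function.Injective key ∧ ∀ σ,
      ((c σ).isPowerOfTwo ∧ c σ ∣ blockStart c key σ) ∨ blockStart c key σ + c σ = ∑ τ, c τ := by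
  set S := ∑ τ, c τ
  have hcS (σ : A) : c σ ≤ S := Finset.single_le_sum (fun _ _ => Nat.zero_le _) (Finset.mem_univ σ)
  -- Powers of two come first, largest first, so each is divisible by every earlier block length;
  -- the exceptional character comes last.
  obtain ⟨key, hkey, hmono⟩ := exists_injective_key_of_lt
    fun σ => if (c σ).isPowerOfTwo then S - c σ else S + 1
  refine ⟨key, hkey, fun σ => ?_⟩
  by_cases hσ : (c σ).isPowerOfTwo
  · refine .inl ⟨hσ, dvd_blockStart fun τ hτ => ?_⟩
    have hw := not_lt.1 fun h => lt_asymm (hmono τ σ h) hτ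
    by_cases hτ' : (c τ).isPowerOfTwo
    · simp only [hσ, hτ', if_true] at hw
      obtain ⟨e, he⟩ := hσ
      obtain ⟨f, hf⟩ := hτ'
      have := hcS σ
      have := hcS τ
      rw [he, hf, Nat.pow_dvd_pow_iff_le_right one_lt_two, ← Nat.pow_le_pow_iff_right one_lt_two,
        ← he, ← hf]
      omega
    · simp only [hσ, hτ', if_true, if_false] at hw
      omega
  · refine .inr (blockStart_add_eq_sum fun τ hτ => hmono σ τ ?_)
    have hτ' : (c τ).isPowerOfTwo := by_contra fun h => hτ (hexc τ σ h hσ)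
    simp only [hσ, hτ', if_true, if_false]
    omega

end Alignment

theorem exists_string_of_counts {A : Type*} [Fintype A] {M : ℕ} {K c : A → ℕ}
    (hsum : ∑ σ, c σ = 2 ^ M) (hK : ∀ σ, K σ < M) (hlo : ∀ σ, 2 ^ K σ ≤ c σ)
    (hhi : ∀ σ, c σ ≤ 2 ^ (K σ + 1))
    (hexc : ∀ σ τ, ¬ (c σ).isPowerOfTwo → ¬ (c τ).isPowerOfTwo → σ = τ) :
    ∃ s : PStr A, s.dom = Set.Icc 1 (2 ^ M) ∧ ∀ σ, {i | s i = some σ}.ncard = c σ ∧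
      ∃ J₁ J₂, IsSatAP M J₁ (2 ^ (M - K σ)) ∧ IsSatAP M J₂ (2 ^ (M - (K σ + 1))) ∧
        J₁ ⊆ {i | s i = some σ} ∧ {i | s i = some σ} ⊆ J₂ := by
  obtain ⟨key, hkey, halign⟩ := exists_key_aligned hexc
  let s : PStr A := fun x =>
    if x ∈ Set.Icc 1 (2 ^ M) then blockAt c key (Nat.bitRev M (x - 1)) else none
  have hocc (σ : A) : {i | s i = some σ} = bitRevPreimage M (allocBlock c key σ) := by
    ext x
    simp only [Set.mem_ofPred_eq, s, bitRevPreimage]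
    split_ifs with hx
    · simp [hx, blockAt_eq_some_iff hkey]
    · simp [hx]
  have hblock (σ : A) : allocBlock c key σ ⊆ Set.Iio (2 ^ M) :=
    hsum ▸ allocBlock_subset_Iio c key σ
  refine ⟨s, ?_, fun σ => ⟨?_, ?_⟩⟩
  · ext x
    simp only [PStr.dom, Set.mem_ofPred_eq, s]
    split_ifs with hx
    · simpa [hx, blockAt_isSome_iff hkey, hsum] using Nat.bitRev_lt M (x - 1)
    · simpa using hx
  · rw [hocc, ncard_bitRevPreimage (hblock σ), allocBlock, ← Finset.coe_Ico,
      Set.ncard_coe_finset, Nat.card_Ico, Nat.add_sub_cancel_left]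
  · rw [hocc]
    refine exists_isSatAP_sandwich (hK σ) (hblock σ) ?_
    rcases halign σ with ⟨hpow, hdvd⟩ | hend
    · exact sandwichedByDyadicBlocks_of_dvd hpow (hlo σ) (hhi σ) hdvd
    · exact sandwichedByDyadicBlocks_of_add_eq (hK σ) (hlo σ) (hhi σ) (hend.trans hsum)

theorem natCast_floor_eq_of_sum_eq {A : Type*} [Fintype A] {f : A → ℝ} {N : ℕ}
    (hf : ∀ σ, 0 ≤ f σ) (hsum : ∑ σ, f σ = N)
    (hone : ∀ σ τ, (¬ ∃ k : ℕ, f σ = k) → (¬ ∃ k : ℕ, f τ = k) → σ = τ) (σ : A) :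
    (⌊f σ⌋₊ : ℝ) = f σ := by
  by_cases hσ : ∃ k : ℕ, f σ = k
  · obtain ⟨k, hk⟩ := hσ
    rw [hk, Nat.floor_natCast]
  have hothers : ∀ τ ∈ Finset.univ.erase σ, f τ = ⌊f τ⌋₊ := fun τ hτ => by
    obtain ⟨k, hk⟩ := not_not.1 fun h => Finset.ne_of_mem_erase hτ (hone τ σ h hσ)
    rw [hk, Nat.floor_natCast]
  have hsplit : f σ = N - ∑ τ ∈ Finset.univ.erase σ, (⌊f τ⌋₊ : ℝ) := by
    rw [← hsum, ← Finset.add_sum_erase _ _ (Finset.mem_univ σ), Finset.sum_congr rfl hothers]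
    ring
  have hle : ∑ τ ∈ Finset.univ.erase σ, ⌊f τ⌋₊ ≤ N := by
    exact_mod_cast (by linarith [hf σ] : ∑ τ ∈ Finset.univ.erase σ, (⌊f τ⌋₊ : ℝ) ≤ N)
  exact absurd ⟨N - ∑ τ ∈ Finset.univ.erase σ, ⌊f τ⌋₊, by push_cast [hle]; exact hsplit⟩ hσ

theorem two_zpow_mul_two_pow {a : ℤ} {M e : ℕ} (h : a + M = e) :
    (2 : ℝ) ^ a * 2 ^ M = ((2 ^ e : ℕ) : ℝ) := by
  rw [← zpow_natCast, ← zpow_add₀ two_ne_zero, h]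
  push_cast
  rfl

theorem exists_counts_of_mem_PBA {A : Type*} [Fintype A] {n : A → ℕ} {p : A → ℝ} (hp : p ∈ PBA n)
    {M : ℕ} (hn : ∀ σ, n σ ≤ M) :
    ∃ c : A → ℕ, (∀ σ, (c σ : ℝ) = p σ * 2 ^ M) ∧ ∑ σ, c σ = 2 ^ M ∧
      (∀ σ, 2 ^ (M - n σ) ≤ c σ ∧ c σ ≤ 2 ^ (M - n σ + 1)) ∧
      ∀ σ τ, ¬ (c σ).isPowerOfTwo → ¬ (c τ).isPowerOfTwo → σ = τ := by
  obtain ⟨⟨⟨hp0, hp1⟩, hbound⟩, hpba⟩ := hp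
  have hlo (σ) : (2 : ℝ) ^ (-(n σ : ℤ)) * 2 ^ M = ((2 ^ (M - n σ) : ℕ) : ℝ) :=
    two_zpow_mul_two_pow (by have := hn σ; omega)
  have hhi (σ) : (2 : ℝ) ^ (-((n σ : ℤ) - 1)) * 2 ^ M = ((2 ^ (M - n σ + 1) : ℕ) : ℝ) :=
    two_zpow_mul_two_pow (by have := hn σ; omega)
  have hbin (σ) (hσ : BinaryVal n σ (p σ)) : ∃ e : ℕ, p σ * 2 ^ M = ((2 ^ e : ℕ) : ℝ) := by
    rcases hσ with h | h
    exacts [⟨_, h ▸ hlo σ⟩, ⟨_, h ▸ hhi σ⟩]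
  have hint := natCast_floor_eq_of_sum_eq (f := fun σ => p σ * 2 ^ M) (N := 2 ^ M)
    (fun σ => mul_nonneg (hp0 σ) (by positivity))
    (by rw [← Finset.sum_mul, hp1]; push_cast; ring)
    fun σ τ hσ hτ => hpba σ τ (fun h => hσ ((hbin σ h).imp' _ fun _ => id))
      (fun h => hτ ((hbin τ h).imp' _ fun _ => id))
  have hpow (σ) (h : BinaryVal n σ (p σ)) : (⌊p σ * 2 ^ M⌋₊).isPowerOfTwo := by
    obtain ⟨e, he⟩ := hbin σ h
    exact ⟨e, by exact_mod_cast (hint σ).trans he⟩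
  refine ⟨fun σ => ⌊p σ * 2 ^ M⌋₊, hint, ?_, fun σ => ⟨?_, ?_⟩,
    fun σ τ hσ hτ => hpba σ τ (mt (hpow σ) hσ) (mt (hpow τ) hτ)⟩
  · exact_mod_cast (by rw [Finset.sum_congr rfl fun σ _ => hint σ, ← Finset.sum_mul, hp1]; simp :
      ∑ σ, (⌊p σ * 2 ^ M⌋₊ : ℝ) = ((2 ^ M : ℕ) : ℝ))
  · have := mul_le_mul_of_nonneg_right (hbound σ).1 (by positivity : (0 : ℝ) ≤ 2 ^ M)
    rw [hlo, ← hint] at this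
    exact_mod_cast this
  · have := mul_le_mul_of_nonneg_right (hbound σ).2 (by positivity : (0 : ℝ) ≤ 2 ^ M)
    rw [hhi, ← hint] at this
    exact_mod_cast this

/-- **Lemma (existence of uniform strings).** For a finite alphabet `A`, a frame `F` defined on
all of `A`, and a pseudo-binary approximation `p ∈ PBA_n`, there exists an `(n,p)`-uniform
string on `{1,…,2^{M_n}}`. -/
theorem exists_uniform_string {A : Type*} [Fintype A] (F : Frame A)
    (hsupp : F.supp = Finset.univ) (p : A → ℝ) (hp : p ∈ PBA F.val) :
    ∃ s : PStr A, s.Uniform F p := by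
  have hmem (σ : A) : σ ∈ F.supp := hsupp ▸ Finset.mem_univ σ
  have hnM (σ : A) : F.val σ + 5 ≤ F.M := Finset.le_sup (f := fun a => F.val a + 5) (hmem σ)
  have hn1 (σ : A) : 1 ≤ F.val σ := F.val_pos σ (hmem σ)
  obtain ⟨c, hc, hsum, hbounds, hexc⟩ :=
    exists_counts_of_mem_PBA hp fun σ => (hnM σ).trans' (by omega)
  obtain ⟨s, hdom, hs⟩ := exists_string_of_counts (K := fun σ => F.M - F.val σ) hsum
    (fun σ => by have := hnM σ; have := hn1 σ; omega) (fun σ => (hbounds σ).1)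
    (fun σ => (hbounds σ).2) hexc
  refine ⟨s, hdom, fun σ => by rw [(hs σ).1, hc σ], fun σ _ => ?_⟩
  obtain ⟨-, J₁, J₂, h⟩ := hs σ
  rw [Nat.sub_sub_self (by have := hnM σ; omega),
    show F.M - (F.M - F.val σ + 1) = F.val σ - 1 by have := hnM σ; omega] at h
  exact ⟨J₁, J₂, h⟩
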